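/- arXiv:1002.3055 — 3 statements merged into one kernel-verified Lean document; each statement's English description precedes it below -/
import Mathlib

section
/- Let b(x) = (x/(2+x²))(δ + 2/log(2+x²)) for a constant δ ∈ ℝ. Then every bounded function u ∈ C²(ℝ) satisfying (1/2)u'' + b u' = 0 on ℝ is constant if and only if δ < 1/2. -/
/-!
Every solution of `u'' / 2 + b u' = 0` satisfies `u' = K g` with `g = exp (-2 B)`, `B' = b`, so a
bounded nonconstant solution exists exactly when the primitive of `g` is bounded (the primitive
itself is then one). Here `B = (δ / 2) log (2 + x²) + log log (2 + x²)`, i.e.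
`g = (2 + x²) ^ (-δ) / log² (2 + x²)`. For `δ ≥ 1/2` it is dominated on `[1, ∞)` by the derivative
of `-1 / log (2 + x²)`; for `δ < 1/2` it dominates `1 / x` near infinity, whose primitive `log x`
is unbounded.
-/

open Real Filter Set intervalIntegral MeasureTheory

section ScaleDensity

variable {b g : ℝ → ℝ}

theorem deriv_eq_mul_of_ode (hg_pos : ∀ x, 0 < g x) (hg : ∀ x, HasDerivAt g (-2 * b x * g x) x)
    {u : ℝ → ℝ} (hu : ContDiff ℝ 2 u)
    (hode : ∀ x, (1 / 2 : ℝ) * deriv (deriv u) x + b x * deriv u x = 0) (x : ℝ) :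
    deriv u x = deriv u 0 / g 0 * g x := by
  have hquot : ∀ y, HasDerivAt (fun y => deriv u y / g y) 0 y := fun y => by
    refine ((hu.differentiable_deriv_two y).hasDerivAt.div (hg y) (hg_pos y).ne').congr_deriv ?_
    rw [div_eq_zero_iff]
    left
    linear_combination (2 * g y) * hode y
  have hconst := is_const_of_deriv_eq_zero (fun y => (hquot y).differentiableAt)
    (fun y => (hquot y).deriv) x 0
  rw [← hconst, div_mul_cancel₀ _ (hg_pos x).ne']

theorem contDiff_two_primitive (hb : Continuous b) (hg : ∀ x, HasDerivAt g (-2 * b x * g x) x) :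
    ContDiff ℝ 2 (fun x => ∫ t in (0 : ℝ)..x, g t) := by
  have hgc : Continuous g := continuous_iff_continuousAt.2 fun x => (hg x).continuousAt
  rw [show (2 : WithTop ℕ∞) = 1 + 1 from rfl, contDiff_succ_iff_deriv]
  refine ⟨fun x => (hgc.integral_hasStrictDerivAt 0 x).hasDerivAt.differentiableAt, by simp, ?_⟩
  rw [funext (hgc.deriv_integral g 0)]
  refine contDiff_one_iff_deriv.2 ⟨fun x => (hg x).differentiableAt, ?_⟩
  rw [funext fun x => (hg x).deriv]
  fun_prop

theorem ode_primitive (hg : ∀ x, HasDerivAt g (-2 * b x * g x) x) (x : ℝ) :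
    (1 / 2 : ℝ) * deriv (deriv fun x => ∫ t in (0 : ℝ)..x, g t) x +
      b x * deriv (fun x => ∫ t in (0 : ℝ)..x, g t) x = 0 := by
  have hgc : Continuous g := continuous_iff_continuousAt.2 fun x => (hg x).continuousAt
  rw [funext (hgc.deriv_integral g 0), (hg x).deriv]
  ring

theorem liouville_iff_primitive_unbounded (hb : Continuous b) (hg_pos : ∀ x, 0 < g x)
    (hg : ∀ x, HasDerivAt g (-2 * b x * g x) x) :
    (∀ u : ℝ → ℝ, ContDiff ℝ 2 u → (∃ C, ∀ x, |u x| ≤ C) →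
      (∀ x, (1 / 2 : ℝ) * deriv (deriv u) x + b x * deriv u x = 0) → ∃ c, ∀ x, u x = c) ↔
    ¬ ∃ C, ∀ x, |∫ t in (0 : ℝ)..x, g t| ≤ C := by
  have hgc : Continuous g := continuous_iff_continuousAt.2 fun x => (hg x).continuousAt
  constructor
  · intro hliouville hbdd
    obtain ⟨c, hc⟩ := hliouville _ (contDiff_two_primitive hb hg) hbdd (ode_primitive hg)
    have hpos : 0 < ∫ t in (0 : ℝ)..1, g t :=
      intervalIntegral_pos_of_pos (hgc.intervalIntegrable 0 1) hg_pos one_pos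
    have h0 := hc 0
    have h1 := hc 1
    simp only [integral_same] at h0 h1
    linarith
  · rintro hunbdd u hu ⟨C, hC⟩ hode
    set K := deriv u 0 / g 0
    have hu' : ∀ x, deriv u x = K * g x := deriv_eq_mul_of_ode hg_pos hg hu hode
    have hud : Differentiable ℝ u := hu.differentiable (by norm_num)
    have hincr : ∀ x, u x - u 0 = K * ∫ t in (0 : ℝ)..x, g t := fun x => by
      rw [← intervalIntegral.integral_const_mul, ← integral_deriv_eq_sub (fun t _ => hud t)]
      · simp_rw [hu']
      · rw [funext hu']
        exact (continuous_const.mul hgc).intervalIntegrable 0 x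
    have hK : K = 0 := by
      by_contra hK
      refine hunbdd ⟨2 * C / |K|, fun x => ?_⟩
      rw [le_div_iff₀ (abs_pos.2 hK), mul_comm, ← abs_mul, ← hincr]
      calc |u x - u 0| ≤ |u x| + |u 0| := abs_sub _ _
        _ ≤ 2 * C := by linarith [hC x, hC 0]
    exact ⟨u 0, fun x => is_const_of_deriv_eq_zero hud (fun y => by rw [hu', hK, zero_mul]) x 0⟩

theorem abs_primitive_le_of_even {C : ℝ} (hg0 : ∀ x, 0 ≤ g x) (heven : ∀ x, g (-x) = g x)
    (hC : ∀ x, 0 ≤ x → ∫ t in (0 : ℝ)..x, g t ≤ C) (x : ℝ) :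
    |∫ t in (0 : ℝ)..x, g t| ≤ C := by
  have hodd : ∫ t in (0 : ℝ)..-x, g t = -∫ t in (0 : ℝ)..x, g t := by
    rw [integral_symm, ← neg_zero, ← integral_comp_neg, neg_zero]
    exact congrArg Neg.neg (integral_congr fun t _ => heven t)
  have habs : ∀ y, 0 ≤ y → |∫ t in (0 : ℝ)..y, g t| ≤ C := fun y hy => by
    rw [abs_of_nonneg (integral_nonneg hy fun t _ => hg0 t)]
    exact hC y hy
  rcases le_total 0 x with hx | hx
  · exact habs x hx
  · simpa only [hodd, abs_neg] using habs (-x) (neg_nonneg.2 hx)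

theorem not_bounded_primitive_of_inv_le (hgc : Continuous g) (hg0 : ∀ x, 0 ≤ g x) {A : ℝ}
    (hA : 0 < A) (hinv : ∀ t, A ≤ t → t⁻¹ ≤ g t) :
    ¬ ∃ C, ∀ x, |∫ t in (0 : ℝ)..x, g t| ≤ C := by
  rintro ⟨C, hC⟩
  obtain ⟨x, hAx, hx⟩ := ((eventually_ge_atTop A).and
    (tendsto_log_atTop.eventually_gt_atTop (C + log A))).exists
  have hlog : log x - log A ≤ ∫ t in A..x, g t :=
    sub_le_integral_of_hasDeriv_right_of_le hAx
      (continuousOn_log.mono fun t ht => (hA.trans_le ht.1).ne')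
      (fun t ht => (hasDerivAt_log (hA.trans ht.1).ne').hasDerivWithinAt)
      (hgc.integrableOn_Icc (μ := volume)) (fun t ht => hinv t ht.1.le)
  have h0A : 0 ≤ ∫ t in (0 : ℝ)..A, g t := integral_nonneg hA.le fun t _ => hg0 t
  have hsplit := integral_add_adjacent_intervals
    (hgc.intervalIntegrable (μ := volume) 0 A) (hgc.intervalIntegrable A x)
  linarith [le_abs_self (∫ t in (0 : ℝ)..x, g t), hC x]

end ScaleDensity

noncomputable def driftPotential (δ x : ℝ) : ℝ :=
  δ / 2 * log (2 + x ^ 2) + log (log (2 + x ^ 2))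

noncomputable def scaleDensity (δ x : ℝ) : ℝ := exp (-2 * driftPotential δ x)

theorem log_two_add_sq_pos (x : ℝ) : 0 < log (2 + x ^ 2) :=
  log_pos (by nlinarith [sq_nonneg x])

theorem hasDerivAt_log_two_add_sq (x : ℝ) :
    HasDerivAt (fun x => log (2 + x ^ 2)) (2 * x / (2 + x ^ 2)) x := by
  simpa using ((hasDerivAt_pow 2 x).const_add 2).log (by positivity : (0 : ℝ) < 2 + x ^ 2).ne'

theorem hasDerivAt_driftPotential (δ x : ℝ) :
    HasDerivAt (driftPotential δ) (x / (2 + x ^ 2) * (δ + 2 / log (2 + x ^ 2))) x := by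
  have hL := hasDerivAt_log_two_add_sq x
  refine ((hL.const_mul (δ / 2)).add (hL.log (log_two_add_sq_pos x).ne')).congr_deriv ?_
  field_simp

theorem hasDerivAt_scaleDensity (δ x : ℝ) :
    HasDerivAt (scaleDensity δ)
      (-2 * (x / (2 + x ^ 2) * (δ + 2 / log (2 + x ^ 2))) * scaleDensity δ x) x := by
  refine (((hasDerivAt_driftPotential δ x).const_mul (-2)).exp).congr_deriv ?_
  rw [scaleDensity]
  ring

theorem continuous_drift (δ : ℝ) :
    Continuous fun x : ℝ => x / (2 + x ^ 2) * (δ + 2 / log (2 + x ^ 2)) := by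
  have hL : Continuous fun x : ℝ => log (2 + x ^ 2) :=
    continuous_iff_continuousAt.2 fun x => (hasDerivAt_log_two_add_sq x).continuousAt
  exact (continuous_id.div (continuous_const.add (continuous_pow 2))
    fun x => (by positivity : (0 : ℝ) < 2 + x ^ 2).ne').mul
      (continuous_const.add (continuous_const.div hL fun x => (log_two_add_sq_pos x).ne'))

theorem scaleDensity_pos (δ x : ℝ) : 0 < scaleDensity δ x := exp_pos _

theorem scaleDensity_neg (δ x : ℝ) : scaleDensity δ (-x) = scaleDensity δ x := by
  simp only [scaleDensity, driftPotential, neg_sq]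

theorem continuous_scaleDensity (δ : ℝ) : Continuous (scaleDensity δ) :=
  continuous_iff_continuousAt.2 fun x => (hasDerivAt_scaleDensity δ x).continuousAt

theorem scaleDensity_eq (δ x : ℝ) :
    scaleDensity δ x = exp (-(δ * log (2 + x ^ 2))) / log (2 + x ^ 2) ^ 2 := by
  have hlog : 2 * log (log (2 + x ^ 2)) = log (log (2 + x ^ 2) ^ 2) := by
    rw [log_pow]
    norm_num
  rw [scaleDensity, driftPotential, show -2 * (δ / 2 * log (2 + x ^ 2) + log (log (2 + x ^ 2))) =
    -(δ * log (2 + x ^ 2)) - 2 * log (log (2 + x ^ 2)) by ring, exp_sub, hlog,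
    exp_log (pow_pos (log_two_add_sq_pos x) 2)]

theorem scaleDensity_le_deriv {δ t : ℝ} (hδ : 1 / 2 ≤ δ) (ht : 1 ≤ t) :
    scaleDensity δ t ≤ 2 * t / (2 + t ^ 2) / log (2 + t ^ 2) ^ 2 := by
  have hL := log_two_add_sq_pos t
  rw [scaleDensity_eq]
  gcongr
  calc exp (-(δ * log (2 + t ^ 2))) ≤ exp (-(log (2 + t ^ 2) / 2)) := by gcongr; nlinarith
    _ = √(2 + t ^ 2) / (2 + t ^ 2) := by
      rw [exp_neg, exp_half, exp_log (by positivity), sqrt_div_self]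
    _ ≤ 2 * t / (2 + t ^ 2) := by
      gcongr
      exact sqrt_le_iff.2 ⟨by linarith, by nlinarith⟩

theorem hasDerivAt_neg_inv_log_two_add_sq (t : ℝ) :
    HasDerivAt (fun t => -(log (2 + t ^ 2))⁻¹)
      (2 * t / (2 + t ^ 2) / log (2 + t ^ 2) ^ 2) t := by
  refine ((hasDerivAt_log_two_add_sq t).inv (log_two_add_sq_pos t).ne').neg.congr_deriv ?_
  ring

theorem primitive_scaleDensity_le {δ : ℝ} (hδ : 1 / 2 ≤ δ) (x : ℝ) :
    ∫ t in (0 : ℝ)..x, scaleDensity δ t ≤ (∫ t in (0 : ℝ)..1, scaleDensity δ t) + (log 3)⁻¹ := by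
  have hg := continuous_scaleDensity δ
  have hsplit : (∫ t in (0 : ℝ)..1, scaleDensity δ t) + ∫ t in (1 : ℝ)..x, scaleDensity δ t =
      ∫ t in (0 : ℝ)..x, scaleDensity δ t :=
    integral_add_adjacent_intervals (hg.intervalIntegrable 0 1) (hg.intervalIntegrable 1 x)
  have hlog3 : 0 < (log 3)⁻¹ := inv_pos.2 (log_pos (by norm_num))
  suffices ∫ t in (1 : ℝ)..x, scaleDensity δ t ≤ (log 3)⁻¹ by linarith
  rcases le_total x 1 with hx1 | hx1
  · rw [integral_symm]
    linarith [integral_nonneg (μ := volume) hx1 fun t _ => (scaleDensity_pos δ t).le]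
  · have hψ := integral_le_sub_of_hasDeriv_right_of_le hx1
      (fun t _ => (hasDerivAt_neg_inv_log_two_add_sq t).continuousAt.continuousWithinAt)
      (fun t _ => (hasDerivAt_neg_inv_log_two_add_sq t).hasDerivWithinAt)
      (hg.integrableOn_Icc (μ := volume)) (fun t ht => scaleDensity_le_deriv hδ ht.1.le)
    norm_num at hψ
    linarith [inv_pos.2 (log_two_add_sq_pos x)]

theorem eventually_two_mul_log_add_le {c : ℝ} (hc : 0 < c) (d : ℝ) :
    ∀ᶠ s in atTop, 2 * log s + d ≤ c * s := by
  filter_upwards [isLittleO_log_id_atTop.bound (by positivity : 0 < c / 4),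
    eventually_ge_atTop (2 * d / c), eventually_ge_atTop 0] with s hlog hd hs
  rw [norm_eq_abs, id, norm_eq_abs, abs_of_nonneg hs] at hlog
  rw [div_le_iff₀ hc] at hd
  linarith [le_abs_self (log s)]

theorem inv_le_scaleDensity {δ : ℝ} (hδ : δ < 1 / 2) :
    ∃ A, 0 < A ∧ ∀ t, A ≤ t → t⁻¹ ≤ scaleDensity δ t := by
  have hL : Tendsto (fun t : ℝ => log (2 + t ^ 2)) atTop atTop :=
    tendsto_log_atTop.comp (tendsto_atTop_add_const_left _ _ (tendsto_pow_atTop two_ne_zero))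
  obtain ⟨A, hA⟩ := eventually_atTop.1 ((hL.eventually
    (eventually_two_mul_log_add_le (by linarith : 0 < 1 / 2 - δ) (log 2 / 2))).and
    (eventually_ge_atTop 2))
  refine ⟨A, by linarith [(hA A le_rfl).2], fun t ht => ?_⟩
  obtain ⟨hlog, ht2⟩ := hA t ht
  have hLt : log (2 + t ^ 2) ≤ log 2 + 2 * log t := by
    calc log (2 + t ^ 2) ≤ log (2 * t ^ 2) := log_le_log (by positivity) (by nlinarith)
      _ = log 2 + 2 * log t := by
        rw [log_mul (by norm_num) (by positivity), log_pow]
        push_cast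
        ring
  rw [← exp_log (inv_pos.2 (by linarith)), log_inv, scaleDensity, driftPotential, exp_le_exp]
  linarith

theorem stmt_2 (δ : ℝ) (b : ℝ → ℝ)
    (hb : ∀ x, b x = (x / (2 + x^2)) * (δ + 2 / Real.log (2 + x^2))) :
    (∀ u : ℝ → ℝ, ContDiff ℝ 2 u → (∃ C, ∀ x, |u x| ≤ C) →
      (∀ x, (1/2 : ℝ) * deriv (deriv u) x + b x * deriv u x = 0) →
      ∃ c, ∀ x, u x = c) ↔ δ < 1/2 := by
  obtain rfl : b = fun x => x / (2 + x ^ 2) * (δ + 2 / log (2 + x ^ 2)) := funext hb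
  refine (liouville_iff_primitive_unbounded (continuous_drift δ) (scaleDensity_pos δ)
    (hasDerivAt_scaleDensity δ)).trans ⟨fun hunbdd => ?_, fun hδ => ?_⟩
  · by_contra hδ
    exact hunbdd ⟨_, abs_primitive_le_of_even (fun x => (scaleDensity_pos δ x).le)
      (scaleDensity_neg δ) fun x _ => primitive_scaleDensity_le (not_lt.1 hδ) x⟩
  · obtain ⟨A, hA, hinv⟩ := inv_le_scaleDensity hδ
    exact not_bounded_primitive_of_inv_le (continuous_scaleDensity δ)
      (fun x => (scaleDensity_pos δ x).le) hA hinv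
end

section
/- Let A and B be symmetric positive semidefinite d×d real matrices with λ I ≤ A² and λ I ≤ B² for some λ > 0 (i.e., A ≥ √λ I and B ≥ √λ I). Then ‖A − B‖² ≤ (1/(4λ))·‖A² − B²‖², where ‖·‖ denotes the Hilbert–Schmidt (Frobenius) norm. -/
/-!
Write `C = A - B`. Since `A² - B² = A C + C B` and `A, B ≥ √λ`, the Frobenius inner product
`⟨C, A² - B²⟩ = tr (Cᵀ A C) + tr (C B Cᵀ)` is at least `2√λ ‖C‖²`. Expanding
`0 ≤ ‖(A² - B²) - 2√λ C‖²` then gives `4λ ‖C‖² ≤ ‖A² - B²‖²`.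
-/

namespace Matrix

section LoewnerOrder

open scoped MatrixOrder ComplexOrder

variable {n 𝕜 : Type*} [Fintype n] [DecidableEq n] [RCLike 𝕜]

theorem PosSemidef.sub_sqrt_smul_one {A : Matrix n n 𝕜} (hA : A.PosSemidef) {r : ℝ}
    (h : (A ^ 2 - r • 1).PosSemidef) : (A - √r • 1).PosSemidef := by
  have hA0 : 0 ≤ A := hA.nonneg
  have hsq : ∀ x ∈ spectrum ℝ A, r ≤ x ^ 2 := by
    rw [← algebraMap_le_cfc_iff (fun x : ℝ ↦ x ^ 2) r A, cfc_pow_id A 2, le_iff,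
      Algebra.algebraMap_eq_smul_one]
    exact h
  have hle : algebraMap ℝ (Matrix n n 𝕜) √r ≤ A := algebraMap_le_of_le_spectrum fun x hx ↦
    (Real.sqrt_le_sqrt (hsq x hx)).trans_eq (Real.sqrt_sq (spectrum_nonneg_of_nonneg hA0 hx))
  rwa [le_iff, Algebra.algebraMap_eq_smul_one] at hle

end LoewnerOrder

variable {m n : Type*} [Fintype m] [Fintype n]

theorem trace_transpose_mul_self_nonneg (X : Matrix m n ℝ) : 0 ≤ trace (Xᵀ * X) := by
  simpa only [conjTranspose_eq_transpose_of_trivial] using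
    (posSemidef_conjTranspose_mul_self X).trace_nonneg

theorem mul_trace_transpose_mul_self_le [DecidableEq m] {M : Matrix m m ℝ} {c : ℝ}
    (hM : (M - c • 1).PosSemidef) (X : Matrix m n ℝ) :
    c * trace (Xᵀ * X) ≤ trace (Xᵀ * M * X) := by
  have h := (hM.conjTranspose_mul_mul_same X).trace_nonneg
  rw [conjTranspose_eq_transpose_of_trivial, Matrix.mul_sub, Matrix.sub_mul, trace_sub,
    Matrix.mul_smul, Matrix.mul_one, Matrix.smul_mul, trace_smul, smul_eq_mul] at h
  linarith

theorem two_mul_trace_transpose_mul_self_le [DecidableEq m] [DecidableEq n]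
    {A : Matrix m m ℝ} {B : Matrix n n ℝ} {c : ℝ}
    (hA : (A - c • 1).PosSemidef) (hB : (B - c • 1).PosSemidef) (X : Matrix m n ℝ) :
    2 * c * trace (Xᵀ * X) ≤ trace (Xᵀ * (A * X + X * B)) := by
  have hAX := mul_trace_transpose_mul_self_le hA X
  have hBX := mul_trace_transpose_mul_self_le hB Xᵀ
  rw [transpose_transpose, trace_mul_cycle, trace_mul_comm X] at hBX
  rw [Matrix.mul_add, trace_add, ← Matrix.mul_assoc, ← Matrix.mul_assoc]
  linarith

theorem trace_transpose_mul_self_sub_smul (X Y : Matrix m n ℝ) (t : ℝ) :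
    trace ((Y - t • X)ᵀ * (Y - t • X)) =
      trace (Yᵀ * Y) - 2 * t * trace (Xᵀ * Y) + t ^ 2 * trace (Xᵀ * X) := by
  have hYX : trace (Yᵀ * X) = trace (Xᵀ * Y) := by
    rw [← trace_transpose, transpose_mul, transpose_transpose]
  simp only [transpose_sub, transpose_smul, Matrix.sub_mul, Matrix.mul_sub, Matrix.smul_mul,
    Matrix.mul_smul, trace_sub, trace_smul, smul_eq_mul, hYX]
  ring

theorem four_mul_sq_mul_trace_transpose_mul_self_le {X Y : Matrix m n ℝ} {c : ℝ} (hc : 0 ≤ c)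
    (h : 2 * c * trace (Xᵀ * X) ≤ trace (Xᵀ * Y)) :
    4 * c ^ 2 * trace (Xᵀ * X) ≤ trace (Yᵀ * Y) := by
  have hsq := trace_transpose_mul_self_nonneg (Y - (2 * c) • X)
  rw [trace_transpose_mul_self_sub_smul] at hsq
  nlinarith

end Matrix

open Matrix in
theorem stmt_5 (d : ℕ) (lam : ℝ) (hlam : 0 < lam)
    (A B : Matrix (Fin d) (Fin d) ℝ)
    (hA : A.PosSemidef) (hB : B.PosSemidef)
    (hA2 : (A ^ 2 - lam • (1 : Matrix (Fin d) (Fin d) ℝ)).PosSemidef)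
    (hB2 : (B ^ 2 - lam • (1 : Matrix (Fin d) (Fin d) ℝ)).PosSemidef) :
    Matrix.trace ((A - B)ᵀ * (A - B)) ≤
      (1 / (4 * lam)) * Matrix.trace ((A ^ 2 - B ^ 2)ᵀ * (A ^ 2 - B ^ 2)) := by
  have hsq : A ^ 2 - B ^ 2 = A * (A - B) + (A - B) * B := by noncomm_ring
  have hinner := two_mul_trace_transpose_mul_self_le (hA.sub_sqrt_smul_one hA2)
    (hB.sub_sqrt_smul_one hB2) (A - B)
  rw [← hsq] at hinner
  have hnorm := four_mul_sq_mul_trace_transpose_mul_self_le (Real.sqrt_nonneg lam) hinner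
  rw [Real.sq_sqrt hlam.le] at hnorm
  rw [one_div, ← div_eq_inv_mul, le_div_iff₀ (by positivity)]
  linarith
end

section
/- Suppose σ : ℝ^d → (symmetric d×d matrices) and b : ℝ^d → ℝ^d satisfy: ‖σ(x)−σ(y)‖² + 2⟨x−y, b(x)−b(y)⟩ ≤ ω(|x−y|) for all x,y with ∫₀^{s₀} ω(s)/s ds < ∞, and ‖σ(x)−σ(y)‖² + 2⟨x−y, b(x)−b(y)⟩ ≤ s₂ < 4μ for |x−y| ≥ s₀. Then with g(s) := (ω(s)/s)1_{(0,s₀]} + (s₂/s)1_{(s₀,∞)} one has ‖σ(x)−σ(y)‖² + 2⟨x−y,b(x)−b(y)⟩ ≤ |x−y| g(|x−y|) for all x ≠ y, and ∫₀^∞ exp(−(1/(4μ))∫₀^r g(s)ds) dr = ∞. -/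
/-!
For `r > s₀` the integral `∫₀^r g` equals `C + s₂ log (r / s₀)` with `C = ∫₀^{s₀} ω(s)/s ds`
finite, so on `(s₀, ∞)` the integrand `exp (-(1/(4μ)) ∫₀^r g)` is a positive multiple of
`r ^ (-s₂/(4μ))`. Since `s₂ / (4μ) < 1`, this power is not integrable at infinity.
-/

open MeasureTheory Set Real Interval

lemma lintegral_Ioi_ofReal_const_mul_rpow_eq_top {a K p : ℝ} (ha : 0 < a) (hK : 0 < K)
    (hp : -1 ≤ p) : ∫⁻ r in Ioi a, ENNReal.ofReal (K * r ^ p) = ⊤ := by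
  have hpos : ∀ r ∈ Ioi a, 0 < r := fun r hr => ha.trans hr
  have h_not_int : ¬IntegrableOn (fun r : ℝ => r ^ p) (Ioi a) := by
    rw [integrableOn_Ioi_rpow_iff ha]; exact hp.not_gt
  have h_rpow : ∫⁻ r in Ioi a, ENNReal.ofReal (r ^ p) = ⊤ := by
    by_contra h
    refine h_not_int ((lintegral_ofReal_ne_top_iff_integrable ?_ ?_).1 h)
    · exact (continuousOn_id.rpow_const fun r hr => Or.inl (hpos r hr).ne').aestronglyMeasurable
        measurableSet_Ioi
    · filter_upwards [ae_restrict_mem measurableSet_Ioi] with r hr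
      exact rpow_nonneg (hpos r hr).le p
  simp_rw [ENNReal.ofReal_mul hK.le]
  rw [lintegral_const_mul' _ _ ENNReal.ofReal_ne_top, h_rpow,
    ENNReal.mul_top (ENNReal.ofReal_pos.2 hK).ne']

lemma intervalIntegral_eq_add_mul_log_of_eq_div {g : ℝ → ℝ} {a c r : ℝ} (ha : 0 < a)
    (hg : IntegrableOn g (Ioc 0 a)) (htail : ∀ s, a < s → g s = c / s) (hr : a < r) :
    ∫ s in 0..r, g s = (∫ s in 0..a, g s) + c * log (r / a) := by
  have hr0 : 0 < r := ha.trans hr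
  have h_eq : EqOn g (fun s => c * s⁻¹) (Ι a r) := fun s hs => by
    rw [uIoc_of_le hr.le] at hs
    rw [htail s hs.1, div_eq_mul_inv]
  have h_tail_int : IntervalIntegrable g volume a r :=
    (intervalIntegrable_congr h_eq).2
      ((intervalIntegrable_inv_iff.2 (Or.inr (notMem_uIcc_of_lt ha hr0))).const_mul c)
  have h_tail : ∫ s in a..r, g s = ∫ s in a..r, c * s⁻¹ :=
    intervalIntegral.integral_congr_ae (Filter.Eventually.of_forall h_eq)
  rw [← intervalIntegral.integral_add_adjacent_intervals
    ((intervalIntegrable_iff_integrableOn_Ioc_of_le ha.le).2 hg) h_tail_int, h_tail,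
    intervalIntegral.integral_const_mul, integral_inv_of_pos ha hr0]

lemma exp_neg_mul_add_mul_log_div {κ I c a r : ℝ} (ha : 0 < a) (hr : 0 < r) :
    exp (-κ * (I + c * log (r / a))) = exp (-κ * I) * a ^ (κ * c) * r ^ (-(κ * c)) := by
  rw [rpow_def_of_pos ha, rpow_def_of_pos hr, log_div hr.ne' ha.ne', mul_assoc, ← exp_add,
    ← exp_add]
  ring_nf

theorem stmt_19_general (d : ℕ) (μ s₀ s₂ : ℝ) (hμ : 0 < μ) (hs₀ : 0 < s₀)
    (hs₂4 : s₂ < 4 * μ)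
    (σ : EuclideanSpace ℝ (Fin d) → Matrix (Fin d) (Fin d) ℝ)
    (b : EuclideanSpace ℝ (Fin d) → EuclideanSpace ℝ (Fin d))
    (ω : ℝ → ℝ)
    (hint : MeasureTheory.IntegrableOn (fun s => ω s / s) (Set.Ioc 0 s₀))
    (h1 : ∀ x y, (∑ i, ∑ j, (σ x i j - σ y i j) ^ 2)
        + 2 * (inner ℝ (x - y) (b x - b y) : ℝ) ≤ ω (dist x y))
    (h2 : ∀ x y, s₀ ≤ dist x y →
      (∑ i, ∑ j, (σ x i j - σ y i j) ^ 2)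
        + 2 * (inner ℝ (x - y) (b x - b y) : ℝ) ≤ s₂)
    (g : ℝ → ℝ)
    (hg : ∀ s, g s = if s ∈ Set.Ioc (0:ℝ) s₀ then ω s / s
      else if s₀ < s then s₂ / s else 0) :
    (∀ x y, x ≠ y →
      (∑ i, ∑ j, (σ x i j - σ y i j) ^ 2)
        + 2 * (inner ℝ (x - y) (b x - b y) : ℝ) ≤ dist x y * g (dist x y)) ∧
    ∫⁻ r in Set.Ioi (0:ℝ),
      ENNReal.ofReal (Real.exp (-(1 / (4 * μ)) * ∫ s in (0:ℝ)..r, g s)) = ⊤ := by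
  have hg_tail : ∀ s, s₀ < s → g s = s₂ / s := fun s hs => by
    rw [hg, if_neg fun h => hs.not_ge h.2, if_pos hs]
  refine ⟨fun x y hxy => ?_, ?_⟩
  · have hd : 0 < dist x y := dist_pos.2 hxy
    rcases le_or_gt (dist x y) s₀ with hle | hlt
    · rw [hg, if_pos ⟨hd, hle⟩, mul_div_cancel₀ _ hd.ne']
      exact h1 x y
    · rw [hg_tail _ hlt, mul_div_cancel₀ _ hd.ne']
      exact h2 x y hlt.le
  have hg_int : IntegrableOn g (Ioc 0 s₀) :=
    hint.congr_fun (fun s hs => by rw [hg, if_pos hs]) measurableSet_Ioc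
  have h_exp : -1 ≤ -(1 / (4 * μ) * s₂) := by
    rw [neg_le_neg_iff, one_div_mul_eq_div, div_le_one (by positivity)]
    exact hs₂4.le
  refine top_le_iff.1 (le_trans ?_ (lintegral_mono_set (Ioi_subset_Ioi hs₀.le)))
  rw [setLIntegral_congr_fun measurableSet_Ioi fun r hr => by
    rw [intervalIntegral_eq_add_mul_log_of_eq_div hs₀ hg_int hg_tail hr,
      exp_neg_mul_add_mul_log_div hs₀ (hs₀.trans hr)] ]
  exact (lintegral_Ioi_ofReal_const_mul_rpow_eq_top hs₀ (by positivity) h_exp).ge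

theorem stmt_19 (d : ℕ) (μ s₀ s₂ : ℝ) (hμ : 0 < μ) (hs₀ : 0 < s₀)
    (hs₂ : 0 ≤ s₂) (hs₂4 : s₂ < 4 * μ)
    (σ : EuclideanSpace ℝ (Fin d) → Matrix (Fin d) (Fin d) ℝ)
    (hσs : ∀ x, (σ x).IsSymm)
    (b : EuclideanSpace ℝ (Fin d) → EuclideanSpace ℝ (Fin d))
    (ω : ℝ → ℝ) (hωnn : ∀ s, 0 < s → 0 ≤ ω s)
    (hint : MeasureTheory.IntegrableOn (fun s => ω s / s) (Set.Ioc 0 s₀))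
    (h1 : ∀ x y, (∑ i, ∑ j, (σ x i j - σ y i j) ^ 2)
        + 2 * (inner ℝ (x - y) (b x - b y) : ℝ) ≤ ω (dist x y))
    (h2 : ∀ x y, s₀ ≤ dist x y →
      (∑ i, ∑ j, (σ x i j - σ y i j) ^ 2)
        + 2 * (inner ℝ (x - y) (b x - b y) : ℝ) ≤ s₂)
    (g : ℝ → ℝ)
    (hg : ∀ s, g s = if s ∈ Set.Ioc (0:ℝ) s₀ then ω s / s
      else if s₀ < s then s₂ / s else 0) :
    (∀ x y, x ≠ y →
      (∑ i, ∑ j, (σ x i j - σ y i j) ^ 2)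
        + 2 * (inner ℝ (x - y) (b x - b y) : ℝ) ≤ dist x y * g (dist x y)) ∧
    ∫⁻ r in Set.Ioi (0:ℝ),
      ENNReal.ofReal (Real.exp (-(1 / (4 * μ)) * ∫ s in (0:ℝ)..r, g s)) = ⊤ :=
  stmt_19_general d μ s₀ s₂ hμ hs₀ hs₂4 σ b ω hint h1 h2 g hg
end
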